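/- (Weak cross-stability of the Kyle model.) Let Σ be an n×n real symmetric positive semidefinite matrix, Ω an n×n real symmetric positive definite matrix, and V a linear subspace of ℝⁿ. Then there exists a constant C such that for every ε ∈ (0, 1], ‖Π̄_V Λ_kyle(Σ, Ω^q_ε) Π_V‖ ≤ C and ‖Π_V Λ_kyle(Σ, Ω^q_ε) Π̄_V‖ ≤ C, where Ω^q_ε := (Π̄_V + εΠ_V) Ω (Π̄_V + εΠ_V); i.e. the off-diagonal blocks of the Kyle cross-impact matrix remain bounded as the liquidity of the instruments in V is scaled down to zero. -/

import Mathlib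

/-! Write `Ωε = (Π̄_V + εΠ_V) Ω (Π̄_V + εΠ_V)` and `M = Λ_kyle(Σ, Ωε)`. Then `M` is symmetric and
solves `M Ωε M = Σ`, so Cauchy–Schwarz for the inner product defined by `Ωε` gives
`(uᵀ M v)² ≤ (uᵀ Ωε⁻¹ u) (vᵀ Σ v)`. Since `Π̄_V + εΠ_V` is the identity on `V^⊥`, the block
`Π̄_V Ωε⁻¹ Π̄_V = Π̄_V Ω⁻¹ Π̄_V` does not depend on `ε`; taking for `u`, `v` the columns of `Π̄_V` and
`Π_V` bounds every entry of `Π̄_V M Π_V` independently of `ε`, and `Π_V M Π̄_V` is its transpose. -/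

open Matrix
open scoped Classical

/-- `sqrtm A` is the unique symmetric positive semidefinite square root of a
symmetric positive semidefinite real matrix `A` (junk value `0` otherwise). -/
noncomputable def sqrtm {n : ℕ} (A : Matrix (Fin n) (Fin n) ℝ) : Matrix (Fin n) (Fin n) ℝ :=
  if h : A.PosSemidef then
    h.1.eigenvectorUnitary.1 * diagonal ((↑) ∘ Real.sqrt ∘ h.1.eigenvalues) *
      (star h.1.eigenvectorUnitary : Matrix (Fin n) (Fin n) ℝ) else 0

/-- The Kyle cross-impact matrix `Λ_kyle(Σ,Ω) = (√Ω)⁻¹ √(√Ω Σ √Ω) (√Ω)⁻¹`. -/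
noncomputable def kyle {n : ℕ} (S W : Matrix (Fin n) (Fin n) ℝ) : Matrix (Fin n) (Fin n) ℝ :=
  (sqrtm W)⁻¹ * sqrtm (sqrtm W * S * sqrtm W) * (sqrtm W)⁻¹

/-- The matrix of the orthogonal projection of `ℝⁿ` (with the standard inner product)
onto the linear subspace `V`. -/
noncomputable def projMat {n : ℕ} (V : Submodule ℝ (EuclideanSpace ℝ (Fin n))) :
    Matrix (Fin n) (Fin n) ℝ :=
  LinearMap.toMatrix' ((EuclideanSpace.equiv (Fin n) ℝ).toLinearMap ∘ₗ V.subtype ∘ₗ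
    (V.orthogonalProjectionOnto).toLinearMap ∘ₗ ((EuclideanSpace.equiv (Fin n) ℝ).symm.toLinearMap))

/-- The regularizing matrix `Π̄_V + ε Π_V`. -/
noncomputable def reg {n : ℕ} (V : Submodule ℝ (EuclideanSpace ℝ (Fin n))) (ε : ℝ) :
    Matrix (Fin n) (Fin n) ℝ :=
  (1 - projMat V) + ε • projMat V

attribute [local instance] Matrix.normedAddCommGroup

section SquareRoot

variable {n : ℕ}

lemma sqrtm_eq_cfc {A : Matrix (Fin n) (Fin n) ℝ} (hA : A.PosSemidef) :
    sqrtm A = cfc Real.sqrt A := by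
  rw [hA.1.cfc_eq, IsHermitian.cfc, sqrtm, dif_pos hA, Unitary.conjStarAlgAut_apply]
  rfl

lemma transpose_sqrtm (A : Matrix (Fin n) (Fin n) ℝ) : (sqrtm A)ᵀ = sqrtm A := by
  rw [← conjTranspose_eq_transpose_of_trivial]
  by_cases hA : A.PosSemidef
  · rw [sqrtm_eq_cfc hA]
    exact cfc_predicate (p := IsSelfAdjoint) _ _
  · rw [sqrtm, dif_neg hA, conjTranspose_zero]

lemma sqrtm_mul_self {A : Matrix (Fin n) (Fin n) ℝ} (hA : A.PosSemidef) :
    sqrtm A * sqrtm A = A := by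
  have hspec : ∀ x ∈ spectrum ℝ A, √x * √x = x := by
    rintro _ hx
    obtain ⟨i, rfl⟩ := hA.1.spectrum_real_eq_range_eigenvalues ▸ hx
    exact Real.mul_self_sqrt (hA.eigenvalues_nonneg i)
  rw [sqrtm_eq_cfc hA, ← cfc_mul .., cfc_congr hspec]
  exact cfc_id' ℝ A hA.1

lemma transpose_kyle (S A : Matrix (Fin n) (Fin n) ℝ) : (kyle S A)ᵀ = kyle S A := by
  simp only [kyle, transpose_mul, transpose_nonsing_inv, transpose_sqrtm, Matrix.mul_assoc]

lemma kyle_mul_mul_kyle {S A : Matrix (Fin n) (Fin n) ℝ} (hS : S.PosSemidef) (hA : A.PosDef) :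
    kyle S A * A * kyle S A = S := by
  set Q := sqrtm A
  have hQQ : Q * Q = A := sqrtm_mul_self hA.posSemidef
  have hQ : IsUnit Q.det :=
    Q.isUnit_iff_isUnit_det.mp (isUnit_of_mul_isUnit_left (hQQ ▸ hA.isUnit))
  have hQSQ : (Q * S * Q).PosSemidef := by
    simpa [Q, conjTranspose_eq_transpose_of_trivial, transpose_sqrtm] using
      hS.mul_mul_conjTranspose_same Q
  set T := sqrtm (Q * S * Q)
  have hTT : T * T = Q * S * Q := sqrtm_mul_self hQSQ
  calc kyle S A * A * kyle S A = Q⁻¹ * T * Q⁻¹ * (Q * Q) * (Q⁻¹ * T * Q⁻¹) := by rw [hQQ]; rfl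
    _ = Q⁻¹ * (T * T) * Q⁻¹ := by
        simp only [Matrix.mul_assoc, nonsing_inv_mul_cancel_left _ _ hQ,
          mul_nonsing_inv_cancel_left _ _ hQ]
    _ = S := by
        rw [hTT]
        simp only [Matrix.mul_assoc, nonsing_inv_mul_cancel_left _ _ hQ, mul_nonsing_inv _ hQ,
          Matrix.mul_one]

end SquareRoot

section CauchySchwarz

variable {ι : Type*} [Fintype ι]

lemma sq_dotProduct_mulVec_le {B : Matrix ι ι ℝ} (hB : B.PosSemidef) (x y : ι → ℝ) :
    (x ⬝ᵥ (B *ᵥ y)) ^ 2 ≤ (x ⬝ᵥ (B *ᵥ x)) * (y ⬝ᵥ (B *ᵥ y)) := by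
  let _ := B.toSeminormedAddCommGroup hB
  let _ := B.toInnerProductSpace hB
  have h := real_inner_mul_inner_self_le x y
  -- the inner product induced by `B` is `⟪x, y⟫ = B *ᵥ y ⬝ᵥ star x`
  change (B *ᵥ y ⬝ᵥ x) * (B *ᵥ y ⬝ᵥ x) ≤ (B *ᵥ x ⬝ᵥ x) * (B *ᵥ y ⬝ᵥ y) at h
  simpa only [dotProduct_comm _ x, dotProduct_comm _ y, sq] using h

variable [DecidableEq ι]

lemma sq_dotProduct_mulVec_le_inv {A : Matrix ι ι ℝ} (hA : A.PosDef) (M : Matrix ι ι ℝ)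
    (u v : ι → ℝ) :
    (u ⬝ᵥ (M *ᵥ v)) ^ 2 ≤ (u ⬝ᵥ (A⁻¹ *ᵥ u)) * (v ⬝ᵥ ((Mᵀ * A * M) *ᵥ v)) := by
  have hAA : A * A⁻¹ = 1 := A.mul_nonsing_inv (A.isUnit_iff_isUnit_det.mp hA.isUnit)
  have hMAM : M *ᵥ v ⬝ᵥ (A *ᵥ (M *ᵥ v)) = v ⬝ᵥ ((Mᵀ * A * M) *ᵥ v) := by
    rw [dotProduct_comm, dotProduct_mulVec, ← mulVec_transpose, ← mulVec_mulVec, dotProduct_comm,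
      mulVec_mulVec, mulVec_mulVec]
  have h := sq_dotProduct_mulVec_le hA.posSemidef (M *ᵥ v) (A⁻¹ *ᵥ u)
  rwa [mulVec_mulVec, hAA, one_mulVec, hMAM, dotProduct_comm (M *ᵥ v),
    dotProduct_comm (A⁻¹ *ᵥ u), mul_comm] at h

lemma sq_mul_mul_apply_le {A : Matrix ι ι ℝ} (hA : A.PosDef) (X M Y : Matrix ι ι ℝ) (i j : ι) :
    (X * M * Y) i j ^ 2 ≤ (X * A⁻¹ * Xᵀ) i i * (Yᵀ * (Mᵀ * A * M) * Y) j j := by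
  simpa only [mul_mul_apply, transpose_transpose] using
    sq_dotProduct_mulVec_le_inv hA M (X i) (Yᵀ j)

end CauchySchwarz

lemma norm_le_norm_sqrt_of_sq_apply_le {m n : Type*} [Fintype m] [Fintype n]
    {X B : Matrix m n ℝ} (h : ∀ i j, X i j ^ 2 ≤ B i j) :
    ‖X‖ ≤ ‖of fun i j => √(B i j)‖ := by
  refine (norm_le_iff (norm_nonneg _)).mpr fun i j => ?_
  calc ‖X i j‖ = √(X i j ^ 2) := (Real.sqrt_sq_eq_abs _).symm
    _ ≤ ‖(of fun i j => √(B i j)) i j‖ := by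
        rw [of_apply, Real.norm_of_nonneg (Real.sqrt_nonneg _)]
        exact Real.sqrt_le_sqrt (h i j)
    _ ≤ _ := norm_entry_le_entrywise_sup_norm _

section Projection

variable {n : ℕ} (V : Submodule ℝ (EuclideanSpace ℝ (Fin n)))

lemma projMat_eq_symm_toEuclideanCLM :
    projMat V = (toEuclideanCLM (𝕜 := ℝ) (n := Fin n)).symm V.starProjection := by
  refine ((toEuclideanCLM (𝕜 := ℝ) (n := Fin n)).symm_apply_apply _).symm.trans ?_
  congr 1
  ext x i
  simp [projMat]

lemma isIdempotentElem_projMat : IsIdempotentElem (projMat V) := by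
  rw [projMat_eq_symm_toEuclideanCLM]
  exact V.isIdempotentElem_starProjection.map _

lemma transpose_projMat : (projMat V)ᵀ = projMat V := by
  have h : star ((toEuclideanCLM (𝕜 := ℝ) (n := Fin n)).symm V.starProjection) =
      (toEuclideanCLM (𝕜 := ℝ) (n := Fin n)).symm (star V.starProjection) :=
    (map_star (toEuclideanCLM (𝕜 := ℝ) (n := Fin n)).symm V.starProjection).symm
  rw [← conjTranspose_eq_transpose_of_trivial, ← star_eq_conjTranspose,
    projMat_eq_symm_toEuclideanCLM, h, (isSelfAdjoint_starProjection V).star_eq]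

lemma one_sub_projMat_mul_reg (ε : ℝ) : (1 - projMat V) * reg V ε = 1 - projMat V := by
  rw [reg, mul_add, Matrix.mul_smul, (isIdempotentElem_projMat V).one_sub.eq,
    (isIdempotentElem_projMat V).one_sub_mul_self, smul_zero, add_zero]

lemma reg_mul_one_sub_projMat (ε : ℝ) : reg V ε * (1 - projMat V) = 1 - projMat V := by
  rw [reg, add_mul, Matrix.smul_mul, (isIdempotentElem_projMat V).one_sub.eq,
    (isIdempotentElem_projMat V).mul_one_sub_self, smul_zero, add_zero]

lemma reg_mul_reg (ε δ : ℝ) : reg V ε * reg V δ = reg V (ε * δ) := by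
  rw [reg, add_mul, one_sub_projMat_mul_reg, reg, Matrix.smul_mul, mul_add, Matrix.mul_smul,
    (isIdempotentElem_projMat V).mul_one_sub_self, (isIdempotentElem_projMat V).eq, zero_add,
    smul_smul, reg]

lemma reg_one : reg V 1 = 1 := by
  rw [reg, one_smul, sub_add_cancel]

lemma inv_reg {ε : ℝ} (hε : ε ≠ 0) : (reg V ε)⁻¹ = reg V ε⁻¹ :=
  inv_eq_left_inv (by rw [reg_mul_reg, inv_mul_cancel₀ hε, reg_one])

lemma isUnit_reg {ε : ℝ} (hε : ε ≠ 0) : IsUnit (reg V ε) :=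
  IsUnit.of_mul_eq_one _ (by rw [reg_mul_reg, mul_inv_cancel₀ hε, reg_one])

lemma transpose_reg (ε : ℝ) : (reg V ε)ᵀ = reg V ε := by
  rw [reg, transpose_add, transpose_sub, transpose_smul, transpose_one, transpose_projMat]

lemma posDef_reg_mul_mul_reg {W : Matrix (Fin n) (Fin n) ℝ} (hW : W.PosDef) {ε : ℝ} (hε : ε ≠ 0) :
    (reg V ε * W * reg V ε).PosDef := by
  have h := (IsUnit.posDef_star_left_conjugate_iff (isUnit_reg V hε)).mpr hW
  rwa [star_eq_conjTranspose, conjTranspose_eq_transpose_of_trivial, transpose_reg] at h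

lemma one_sub_projMat_mul_inv_mul_one_sub_projMat (W : Matrix (Fin n) (Fin n) ℝ) {ε : ℝ}
    (hε : ε ≠ 0) :
    (1 - projMat V) * (reg V ε * W * reg V ε)⁻¹ * (1 - projMat V) =
      (1 - projMat V) * W⁻¹ * (1 - projMat V) := by
  rw [Matrix.mul_inv_rev, Matrix.mul_inv_rev, inv_reg V hε, ← mul_assoc, ← mul_assoc,
    one_sub_projMat_mul_reg, mul_assoc, reg_mul_one_sub_projMat]

end Projection

/-- weak cross-stability of the Kyle model: the off-diagonal blocks of
the Kyle cross-impact matrix remain bounded as liquidity in `V` is scaled to zero. -/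
theorem kyle_weak_cross_stable {n : ℕ}
    (S W : Matrix (Fin n) (Fin n) ℝ) (hS : S.PosSemidef) (hW : W.PosDef)
    (V : Submodule ℝ (EuclideanSpace ℝ (Fin n))) :
    ∃ C : ℝ, ∀ ε : ℝ, ε ∈ Set.Ioc (0 : ℝ) 1 →
      ‖(1 - projMat V) * kyle S (reg V ε * W * reg V ε) * projMat V‖ ≤ C ∧
      ‖projMat V * kyle S (reg V ε * W * reg V ε) * (1 - projMat V)‖ ≤ C := by
  have hP : (projMat V)ᵀ = projMat V := transpose_projMat V
  have hQ : (1 - projMat V)ᵀ = 1 - projMat V := by rw [transpose_sub, transpose_one, hP]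
  refine ⟨‖of fun i j => √(((1 - projMat V) * W⁻¹ * (1 - projMat V)) i i *
    (projMat V * S * projMat V) j j)‖, fun ε hε => ?_⟩
  have hΩ := posDef_reg_mul_mul_reg V hW hε.1.ne'
  set M := kyle S (reg V ε * W * reg V ε)
  have hMΩM : Mᵀ * (reg V ε * W * reg V ε) * M = S := by
    rw [transpose_kyle, kyle_mul_mul_kyle hS hΩ]
  have hblock : ‖(1 - projMat V) * M * projMat V‖ ≤ _ :=
    norm_le_norm_sqrt_of_sq_apply_le fun i j => by
      simpa only [hQ, hP, hMΩM, one_sub_projMat_mul_inv_mul_one_sub_projMat V W hε.1.ne'] using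
        sq_mul_mul_apply_le hΩ (1 - projMat V) M (projMat V) i j
  refine ⟨hblock, ?_⟩
  rwa [← norm_transpose, transpose_mul, transpose_mul, hQ, hP, transpose_kyle, ← mul_assoc]
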